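/- arXiv:1001.4966 — 2 statements merged into one kernel-verified Lean document; each statement's English description precedes it below -/
import Mathlib

section
/- Let p > 1, k = p/(p−1), f > 0 and λ > 0 be such that k·(f/λ)^{1−1/p} > f (equivalently λ < (k^p/f)^{1/(p−1)}). Then there exists a strictly decreasing, continuous, convex function G : (0, f/λ] → (0,∞) such that ∫_0^{f/λ} G(t) dt = f, G(t) ≤ t^{−1/p} for every t ∈ (0, f/λ], lim_{t→0⁺} G(t) = +∞, and lim_{t→+∞} t^p · |{ s ∈ (0, f/λ] : G(s) > t }| = 1, where |·| denotes Lebesgue measure. -/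
open MeasureTheory Set Filter ENNReal

/-- A measure is non-atomic if every measurable set of positive measure contains a
measurable subset of strictly smaller positive measure. -/
def Nonatomic {X : Type*} [MeasurableSpace X] (μ : Measure X) : Prop :=
  ∀ A : Set X, MeasurableSet A → 0 < μ A →
    ∃ B, B ⊆ A ∧ MeasurableSet B ∧ 0 < μ B ∧ μ B < μ A

/-- A tree on a probability measure space, in the sense of Melas. -/
structure TreeOn (X : Type*) [MeasurableSpace X] (μ : MeasureTheory.Measure X) where
  carrier : Set (Set X)
  child : Set X → Set (Set X)
  level : ℕ → Set (Set X)
  univ_mem : Set.univ ∈ carrier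
  meas : ∀ I ∈ carrier, MeasurableSet I
  pos : ∀ I ∈ carrier, 0 < μ I
  child_subset_carrier : ∀ I ∈ carrier, child I ⊆ carrier
  child_finite : ∀ I ∈ carrier, (child I).Finite
  child_two : ∀ I ∈ carrier, ∃ J ∈ child I, ∃ K ∈ child I, J ≠ K
  child_sub : ∀ I ∈ carrier, ∀ J ∈ child I, J ⊆ I
  child_almost_disjoint : ∀ I ∈ carrier, ∀ J ∈ child I, ∀ K ∈ child I, J ≠ K → μ (J ∩ K) = 0
  child_union : ∀ I ∈ carrier, ⋃₀ child I = I
  level_zero : level 0 = {Set.univ}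
  level_succ : ∀ m, level (m + 1) = ⋃ I ∈ level m, child I
  carrier_eq : carrier = ⋃ m, level m
  level_tendsto : Filter.Tendsto (fun m => ⨆ I ∈ level m, μ I) Filter.atTop (nhds 0)

/-- The maximal operator associated to a tree `T`:
`M_T φ (x) = sup { (1/μ I) ∫_I |φ| dμ : x ∈ I, I ∈ T }`. -/
noncomputable def maxT {X : Type*} [MeasurableSpace X] (μ : MeasureTheory.Measure X)
    (T : TreeOn X μ) (φ : X → ℝ) (x : X) : ℝ≥0∞ :=
  ⨆ (I : Set X) (_ : I ∈ T.carrier) (_ : x ∈ I),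
    (∫⁻ y in I, ENNReal.ofReal |φ y| ∂μ) / μ I

/-- The norm `|||φ|||_{p,∞} = sup { μ(E)^{-1+1/p} ∫_E |φ| dμ : E measurable, μ E > 0 }`. -/
noncomputable def tripleNorm {X : Type*} [MeasurableSpace X] (μ : MeasureTheory.Measure X)
    (p : ℝ) (φ : X → ℝ) : ℝ≥0∞ :=
  ⨆ (E : Set X) (_ : MeasurableSet E) (_ : 0 < μ E),
    μ E ^ (-1 + 1/p) * ∫⁻ x in E, ENNReal.ofReal |φ x| ∂μ

/-- The standard quasi-norm `‖φ‖_{p,∞} = sup { λ · μ({|φ| > λ})^{1/p} : λ > 0 }`. -/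
noncomputable def weakNorm {X : Type*} [MeasurableSpace X] (μ : MeasureTheory.Measure X)
    (p : ℝ) (φ : X → ℝ) : ℝ≥0∞ :=
  ⨆ (l : ℝ) (_ : 0 < l), ENNReal.ofReal l * μ {x | l < |φ x|} ^ (1/p)

/-- The standard quasi-norm for an `ℝ≥0∞`-valued function (such as `maxT μ T φ`). -/
noncomputable def weakNormE {X : Type*} [MeasurableSpace X] (μ : MeasureTheory.Measure X)
    (p : ℝ) (g : X → ℝ≥0∞) : ℝ≥0∞ :=
  ⨆ (l : ℝ) (_ : 0 < l), ENNReal.ofReal l * μ {x | ENNReal.ofReal l < g x} ^ (1/p)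

/-!
Take `G = max (t^{-1/p} - c) (A - ε t)` on `(0, a]`, `a = f/λ`, where the line `A - ε t` is
positive on `(0, a]`, stays below `a^{-1/p}` and has integral less than `f`. For every `c ≥ 0`
such a `G` is strictly decreasing, continuous, convex, positive and below `t^{-1/p}`; for large
`τ` its superlevel set `{G > τ}` is exactly `(0, (τ + c)^{-p})`, whence `τ^p |{G > τ}| → 1`.
The integral of `G` is `a`-Lipschitz in `c`, equals `k a^{1-1/p} > f` at `c = 0` and falls
below `f` for large `c`, so the intermediate value theorem yields a `c` with `∫ G = f`.
-/

open Topology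

theorem convexOn_rpow_of_neg {q : ℝ} (hq : q < 0) :
    ConvexOn ℝ (Ioi 0) fun x : ℝ => x ^ q := by
  refine convexOn_of_hasDerivWithinAt2_nonneg (convex_Ioi 0)
    (f' := fun x => q * x ^ (q - 1)) (f'' := fun x => q * ((q - 1) * x ^ (q - 1 - 1)))
    (continuousOn_id.rpow_const fun x hx => Or.inl hx.ne') ?_ ?_ ?_ <;>
    rw [interior_Ioi] <;> intro x hx
  · exact (Real.hasDerivAt_rpow_const (Or.inl hx.ne')).hasDerivWithinAt
  · exact ((Real.hasDerivAt_rpow_const (Or.inl hx.ne')).const_mul q).hasDerivWithinAt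
  · rw [← mul_assoc]
    exact mul_nonneg (mul_nonneg_of_nonpos_of_nonpos hq.le (by linarith))
      (Real.rpow_nonneg (le_of_lt hx) _)

theorem integrableOn_Ioc_zero_rpow_neg {r b : ℝ} (hr : r < 1) (hb : 0 ≤ b) :
    IntegrableOn (fun t : ℝ => t ^ (-r)) (Ioc 0 b) :=
  (intervalIntegrable_iff_integrableOn_Ioc_of_le hb).mp
    (intervalIntegral.intervalIntegrable_rpow' (by linarith))

theorem setIntegral_Ioc_zero_rpow_neg {r b : ℝ} (hr : r < 1) (hb : 0 ≤ b) :
    ∫ t in Ioc 0 b, t ^ (-r) = b ^ (1 - r) / (1 - r) := by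
  rw [← intervalIntegral.integral_of_le hb, integral_rpow (Or.inl (by linarith)),
    neg_add_eq_sub, Real.zero_rpow (by linarith), sub_zero]

theorem lipschitzWith_setIntegral_max_sub_const {α : Type*} [MeasurableSpace α]
    {μ : Measure α} {s : Set α} (hs : μ s < ∞) {g h : α → ℝ} (hg : IntegrableOn g s μ)
    (hh : IntegrableOn h s μ) :
    LipschitzWith (μ s).toNNReal fun c => ∫ x in s, max (g x - c) (h x) ∂μ := by
  have hint (c : ℝ) : IntegrableOn (fun x => max (g x - c) (h x)) s μ :=
    (hg.sub (integrableOn_const hs.ne)).sup hh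
  refine LipschitzWith.of_dist_le_mul fun c₁ c₂ => ?_
  rw [Real.dist_eq, Real.dist_eq, ← integral_sub (hint c₁) (hint c₂),
    coe_toNNReal_eq_toReal, ← measureReal_def, mul_comm]
  refine norm_setIntegral_le_of_norm_le_const
    (f := fun x => max (g x - c₁) (h x) - max (g x - c₂) (h x)) hs fun x _ => ?_
  simpa [Real.norm_eq_abs, abs_sub_comm c₁] using
    abs_max_sub_max_le_abs (g x - c₁) (g x - c₂) (h x)

noncomputable def powProfile (p c A ε t : ℝ) : ℝ := max (t ^ (-(1 / p)) - c) (A - ε * t)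

section powProfile

variable {p c A ε a : ℝ}

theorem strictAntiOn_powProfile (hp : 0 < p) (hε : 0 < ε) :
    StrictAntiOn (powProfile p c A ε) (Ioi 0) := fun x hx y _ hxy =>
  max_lt_max (sub_lt_sub_right (Real.rpow_lt_rpow_of_neg hx hxy (by simpa using hp)) c)
    (sub_lt_sub_left (mul_lt_mul_of_pos_left hxy hε) A)

theorem continuousOn_powProfile : ContinuousOn (powProfile p c A ε) (Ioi 0) := by
  have hpow : ContinuousOn (fun t : ℝ => t ^ (-(1 / p))) (Ioi 0) :=
    continuousOn_id.rpow_const fun _ ht => Or.inl (ne_of_gt ht)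
  exact (hpow.sub continuousOn_const).sup (by fun_prop)

theorem convexOn_powProfile (hp : 0 < p) : ConvexOn ℝ (Ioi 0) (powProfile p c A ε) :=
  ((convexOn_rpow_of_neg (by simpa using hp)).sub (concaveOn_const c (convex_Ioi 0))).sup
    ((convexOn_const A (convex_Ioi 0)).sub ((LinearMap.lsmul ℝ ℝ ε).concaveOn (convex_Ioi 0)))

theorem powProfile_pos (hε : 0 ≤ ε) (hA : ε * a < A) {t : ℝ} (ht : t ∈ Ioc 0 a) :
    0 < powProfile p c A ε t :=
  lt_max_of_lt_right (by nlinarith [ht.2])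

theorem powProfile_le_rpow (hp : 0 < p) (hc : 0 ≤ c) (hε : 0 ≤ ε) (hA : A ≤ a ^ (-(1 / p)))
    {t : ℝ} (ht : t ∈ Ioc 0 a) : powProfile p c A ε t ≤ t ^ (-(1 / p)) := by
  have hat : a ^ (-(1 / p)) ≤ t ^ (-(1 / p)) :=
    Real.rpow_le_rpow_of_nonpos ht.1 ht.2 (by simpa using hp.le)
  exact max_le (by linarith) (by nlinarith [ht.1])

theorem tendsto_powProfile_nhdsGT_zero (hp : 0 < p) :
    Tendsto (powProfile p c A ε) (𝓝[>] 0) atTop :=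
  tendsto_atTop_mono (fun _ => le_max_left _ _)
    (tendsto_atTop_add_const_right _ (-c) (tendsto_rpow_neg_nhdsGT_zero (by simpa using hp)))

theorem setIntegral_powProfile_zero (hp : 1 < p) (ha : 0 ≤ a) (hε : 0 ≤ ε)
    (hA : A ≤ a ^ (-(1 / p))) :
    ∫ t in Ioc 0 a, powProfile p 0 A ε t = a ^ (1 - 1 / p) / (1 - 1 / p) := by
  have hp0 : 0 < p := by linarith
  rw [setIntegral_congr_fun measurableSet_Ioc fun t ht =>
    le_antisymm (powProfile_le_rpow hp0 le_rfl hε hA ht) (le_max_of_le_left (sub_zero _).ge)]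
  exact setIntegral_Ioc_zero_rpow_neg ((div_lt_one hp0).2 hp) ha

theorem setIntegral_powProfile_le {C : ℝ} (hp : 1 < p) (ha : 0 ≤ a) (hC : 0 < C) (hA : 0 ≤ A)
    (hε : 0 ≤ ε) :
    ∫ t in Ioc 0 a, powProfile p C A ε t ≤ A * a + C ^ (1 - p) / (1 - 1 / p) := by
  have hp0 : 0 < p := by linarith
  have hr : 1 / p < 1 := (div_lt_one hp0).2 hp
  set δ := C ^ (-p)
  have hδ : 0 ≤ δ := by positivity
  -- `t^{-1/p} - C` changes sign at `δ`: the profile is `≤ A + t^{-1/p}` before, `≤ A` after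
  have hind : Integrable ((Ioc 0 δ).indicator fun t : ℝ => t ^ (-(1 / p))) :=
    (integrableOn_Ioc_zero_rpow_neg hr hδ).integrable_indicator measurableSet_Ioc
  have hle : ∀ t ∈ Ioc 0 a,
      powProfile p C A ε t ≤ A + (Ioc 0 δ).indicator (fun t => t ^ (-(1 / p))) t := by
    intro t ht
    by_cases htδ : t ≤ δ
    · rw [indicator_of_mem (show t ∈ Ioc 0 δ from ⟨ht.1, htδ⟩)]
      exact max_le (by linarith) (by nlinarith [ht.1, Real.rpow_pos_of_pos ht.1 (-(1 / p))])
    · have hlt : t ^ (-(1 / p)) < C := by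
        rw [show -(1 / p) = (-p)⁻¹ by rw [inv_neg, one_div],
          Real.rpow_inv_lt_iff_of_neg ht.1 hC (neg_lt_zero.2 hp0)]
        exact not_le.1 htδ
      rw [indicator_of_notMem fun h => htδ h.2, add_zero]
      exact max_le (by linarith) (by nlinarith [ht.1])
  calc ∫ t in Ioc 0 a, powProfile p C A ε t
      ≤ ∫ t in Ioc 0 a, (A + (Ioc 0 δ).indicator (fun t => t ^ (-(1 / p))) t) :=
        setIntegral_mono_on ((((integrableOn_Ioc_zero_rpow_neg hr ha).sub
          (integrableOn_const measure_Ioc_lt_top.ne)).sup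
          (by fun_prop : Continuous fun t : ℝ => A - ε * t).integrableOn_Ioc))
          ((integrable_const A).add hind.integrableOn) measurableSet_Ioc hle
    _ = A * a + ∫ t in Ioc 0 a, (Ioc 0 δ).indicator (fun t => t ^ (-(1 / p))) t := by
        rw [integral_add (integrable_const A) hind.integrableOn,
          setIntegral_const, Real.volume_real_Ioc_of_le ha, sub_zero, smul_eq_mul, mul_comm]
    _ ≤ A * a + ∫ t, (Ioc 0 δ).indicator (fun t => t ^ (-(1 / p))) t :=
        add_le_add le_rfl (setIntegral_le_integral hind (Eventually.of_forall fun t =>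
          indicator_nonneg (fun t ht => Real.rpow_nonneg ht.1.le _) t))
    _ = A * a + C ^ (1 - p) / (1 - 1 / p) := by
        rw [integral_indicator measurableSet_Ioc, setIntegral_Ioc_zero_rpow_neg hr hδ,
          ← Real.rpow_mul hC.le]
        congr 3
        field_simp
        ring

theorem setOf_lt_powProfile_eq {τ : ℝ} (hp : 0 < p) (ha : 0 < a) (hε : 0 ≤ ε)
    (hAτ : A ≤ τ) (haτ : a ^ (-(1 / p)) ≤ τ + c) :
    {s ∈ Ioc 0 a | τ < powProfile p c A ε s} = Ioo 0 ((τ + c) ^ (-p)) := by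
  have hexp : -(1 / p) = (-p)⁻¹ := by rw [inv_neg, one_div]
  have hu : 0 < τ + c := (Real.rpow_pos_of_pos ha _).trans_le haτ
  have hp' : -p < 0 := neg_lt_zero.2 hp
  have hua : (τ + c) ^ (-p) ≤ a := by rwa [hexp, Real.rpow_inv_le_iff_of_neg ha hu hp'] at haτ
  have key (s : ℝ) (hs : 0 < s) : τ + c < s ^ (-(1 / p)) ↔ s < (τ + c) ^ (-p) := by
    rw [hexp]; exact Real.lt_rpow_inv_iff_of_neg hu hs hp'
  ext s
  simp only [mem_ofPred_eq, mem_Ioc, mem_Ioo, powProfile, lt_max_iff]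
  refine ⟨fun ⟨⟨hs, _⟩, hτs⟩ => ⟨hs, ?_⟩,
    fun ⟨hs, hsu⟩ => ⟨⟨hs, hsu.le.trans hua⟩, Or.inl ?_⟩⟩
  · rcases hτs with hτs | hτs
    · exact (key s hs).1 (by linarith)
    · nlinarith
  · linarith [(key s hs).2 hsu]

theorem tendsto_rpow_mul_volume_setOf_lt_powProfile (hp : 0 < p) (ha : 0 < a) (hε : 0 ≤ ε) :
    Tendsto (fun τ : ℝ => τ ^ p * (volume {s ∈ Ioc 0 a | τ < powProfile p c A ε s}).toReal)
      atTop (𝓝 1) := by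
  have hratio : Tendsto (fun τ : ℝ => 1 - c / (τ + c)) atTop (𝓝 1) := by
    simpa using (tendsto_const_nhds.div_atTop
      (tendsto_atTop_add_const_right _ c tendsto_id)).const_sub 1
  have hlim := hratio.rpow_const (p := p) (Or.inl one_ne_zero)
  rw [Real.one_rpow] at hlim
  refine hlim.congr' ?_
  filter_upwards [eventually_ge_atTop A, eventually_ge_atTop (a ^ (-(1 / p)) - c),
    eventually_gt_atTop 0] with τ hAτ haτ hτ
  have hu : 0 < τ + c := (Real.rpow_pos_of_pos ha _).trans_le (by linarith)
  rw [setOf_lt_powProfile_eq hp ha hε hAτ (by linarith), Real.volume_Ioo, sub_zero,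
    ENNReal.toReal_ofReal (by positivity), Real.rpow_neg hu.le, ← div_eq_mul_inv,
    ← Real.div_rpow hτ.le hu.le]
  congr 1
  field_simp
  ring

theorem exists_setIntegral_powProfile_eq {f : ℝ} (hp : 1 < p) (ha : 0 ≤ a) (hA : 0 ≤ A)
    (hAa : A ≤ a ^ (-(1 / p))) (hε : 0 ≤ ε) (hAf : A * a < f)
    (hf : f ≤ a ^ (1 - 1 / p) / (1 - 1 / p)) :
    ∃ c, 0 ≤ c ∧ ∫ t in Ioc 0 a, powProfile p c A ε t = f := by
  have hp0 : 0 < p := by linarith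
  have hr : 1 / p < 1 := (div_lt_one hp0).2 hp
  obtain ⟨C, hCsmall, hC⟩ : ∃ C, C ^ (1 - p) / (1 - 1 / p) ≤ f - A * a ∧ 0 < C := by
    have hdecay : Tendsto (fun C : ℝ => C ^ (-(p - 1)) / (1 - 1 / p)) atTop (𝓝 0) := by
      simpa using (tendsto_rpow_neg_atTop (by linarith : 0 < p - 1)).div_const (1 - 1 / p)
    refine ((hdecay.eventually (ge_mem_nhds (sub_pos.2 hAf))).and
      (eventually_gt_atTop 0)).exists.imp fun C hC => ?_
    rwa [neg_sub] at hC
  have hcont : Continuous fun c => ∫ t in Ioc 0 a, powProfile p c A ε t :=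
    (lipschitzWith_setIntegral_max_sub_const measure_Ioc_lt_top
      (integrableOn_Ioc_zero_rpow_neg hr ha)
      (by fun_prop : Continuous fun t : ℝ => A - ε * t).integrableOn_Ioc).continuous
  obtain ⟨c, hc, hcf⟩ := intermediate_value_Icc' hC.le hcont.continuousOn
    (show f ∈ Icc _ _ from ⟨by linarith [setIntegral_powProfile_le (ε := ε) hp ha hC hA hε],
      by rwa [setIntegral_powProfile_zero hp ha hε hAa]⟩)
  exact ⟨c, hc.1, hcf⟩

end powProfile

/-- Auxiliary construction in Theorem 4.1: existence of a strictly decreasing, continuous,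
convex `G : (0, f/λ] → (0,∞)` with `∫_0^{f/λ} G = f`, `G(t) ≤ t^{-1/p}`,
`G(t) → ∞` as `t → 0⁺`, and `t^p · |{G > t}| → 1` as `t → ∞`. -/
theorem stmt16 (p k f l : ℝ) (hp : 1 < p) (hk : k = p / (p - 1))
    (hf : 0 < f) (hl : 0 < l) (hcond : f < k * (f / l) ^ (1 - 1 / p)) :
    ∃ G : ℝ → ℝ,
      StrictAntiOn G (Set.Ioc 0 (f / l)) ∧
      ContinuousOn G (Set.Ioc 0 (f / l)) ∧
      ConvexOn ℝ (Set.Ioc 0 (f / l)) G ∧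
      (∀ t ∈ Set.Ioc 0 (f / l), 0 < G t) ∧
      (∫ t in Set.Ioc 0 (f / l), G t = f) ∧
      (∀ t ∈ Set.Ioc 0 (f / l), G t ≤ t ^ (-(1 / p))) ∧
      Filter.Tendsto G (nhdsWithin 0 (Set.Ioi 0)) Filter.atTop ∧
      Filter.Tendsto
        (fun t : ℝ => t ^ p *
          (MeasureTheory.volume {s ∈ Set.Ioc 0 (f / l) | t < G s}).toReal)
        Filter.atTop (nhds 1) := by
  have hp0 : 0 < p := by linarith
  set a := f / l
  have ha : 0 < a := div_pos hf hl
  obtain ⟨A, hA, hAa, hAf⟩ : ∃ A, 0 < A ∧ A ≤ a ^ (-(1 / p)) ∧ A * a < f :=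
    ⟨min (f / (2 * a)) (a ^ (-(1 / p))), lt_min (by positivity) (Real.rpow_pos_of_pos ha _),
      min_le_right _ _, by
        calc min (f / (2 * a)) (a ^ (-(1 / p))) * a ≤ f / (2 * a) * a := by
              gcongr; exact min_le_left _ _
          _ < f := by field_simp; linarith⟩
  obtain ⟨ε, hε, hεa⟩ : ∃ ε, 0 < ε ∧ ε * a < A :=
    ⟨A / (2 * a), by positivity, by field_simp; linarith⟩
  have hka : k * a ^ (1 - 1 / p) = a ^ (1 - 1 / p) / (1 - 1 / p) := by
    rw [hk]; field_simp
  obtain ⟨c, hc, hcf⟩ := exists_setIntegral_powProfile_eq hp ha.le hA.le hAa hε.le hAf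
    (hka ▸ hcond.le)
  refine ⟨powProfile p c A ε, (strictAntiOn_powProfile hp0 hε).mono Ioc_subset_Ioi_self,
    continuousOn_powProfile.mono Ioc_subset_Ioi_self,
    (convexOn_powProfile hp0).subset Ioc_subset_Ioi_self (convex_Ioc 0 a),
    fun t ht => powProfile_pos hε.le hεa ht, hcf,
    fun t ht => powProfile_le_rpow hp0 hc hε.le hAa ht,
    tendsto_powProfile_nhdsGT_zero hp0,
    tendsto_rpow_mul_volume_setOf_lt_powProfile hp0 ha hε.le⟩
end

section
/- Let M > 0, let h : [0,M] → [0,∞) be Lebesgue integrable with (1/M) ∫_0^M h(t) dt = λ for some λ > 0, and let (a_j)_{j≥1} be a sequence of positive reals with Σ_j a_j = M. Then there exist pairwise disjoint Lebesgue measurable sets A_j ⊆ [0,M] with |A_j| = a_j for every j, Σ_j |A_j| = M, and (1/a_j) ∫_{A_j} h(t) dt = λ for every j. -/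
open MeasureTheory Set Filter ENNReal

/-!
Split `[0, M]` into `P = {h ≥ λ}` and `N = {h < λ}` and exhaust each of them by nested families
`S_P u`, `S_N v` with `|S_P u| = u`, `|S_N v| = v`. Then `F u = ∫_{S_P u} h - λ u` and
`G v = λ v - ∫_{S_N v} h` are continuous and nondecreasing, vanish at `0` and agree at `(|P|, |N|)`,
so the intermediate value theorem lets us walk monotonically along `{F u = G v}` through points
with `u + v = a₀ + ⋯ + a_{j-1}`. The sets `E j = S_P u_j ∪ S_N v_j` increase, have measure
`a₀ + ⋯ + a_{j-1}` and average `λ`, and `A j = E (j + 1) \ E j`.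
-/

open Topology

section NestedFamilies

variable {α : Type*} [MeasurableSpace α] {μ : Measure α}

theorem measure_sdiff_eq_ofReal_sub {s t : Set α} {x y : ℝ} (hst : s ⊆ t) (hs : MeasurableSet s)
    (hx : 0 ≤ x) (hμs : μ s = ENNReal.ofReal x) (hμt : μ t = ENNReal.ofReal y) :
    μ (t \ s) = ENNReal.ofReal (y - x) := by
  rw [measure_sdiff hst hs.nullMeasurableSet (by simp [hμs]), hμs, hμt, ENNReal.ofReal_sub _ hx]

theorem setIntegral_sub_setIntegral {E : Type*} [NormedAddCommGroup E] [NormedSpace ℝ E]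
    {f : α → E} {s t : Set α} (hs : MeasurableSet s) (ht : MeasurableSet t)
    (hfs : IntegrableOn f s μ) (hft : IntegrableOn f t μ) :
    ∫ x in s, f x ∂μ - ∫ x in t, f x ∂μ = ∫ x in s \ t, f x ∂μ - ∫ x in t \ s, f x ∂μ := by
  rw [← integral_inter_add_sdiff ht hfs, ← integral_inter_add_sdiff hs hft, inter_comm]
  abel

theorem MeasureTheory.IntegrableOn.tendsto_setIntegral_nhds_zero {E : Type*} [NormedAddCommGroup E]
    [NormedSpace ℝ E] {ι : Type*} {f : α → E} {B : Set α} (hf : IntegrableOn f B μ)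
    {l : Filter ι} {s : ι → Set α} (hsB : ∀ i, s i ⊆ B) (hs : Tendsto (μ ∘ s) l (𝓝 0)) :
    Tendsto (fun i => ∫ x in s i, f x ∂μ) l (𝓝 0) := by
  have hsB' : Tendsto (μ.restrict B ∘ s) l (𝓝 0) :=
    tendsto_of_tendsto_of_tendsto_of_le_of_le tendsto_const_nhds hs (fun _ => zero_le)
      (fun i => Measure.restrict_apply_le B (s i))
  simpa only [Measure.restrict_restrict_of_subset (hsB _)] using
    Integrable.tendsto_setIntegral_nhds_zero hf hsB'

structure IsNestedExhaustion (μ : Measure α) (A : Set α) (S : ℝ → Set α) : Prop where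
  monotone : Monotone S
  measurableSet : ∀ u, MeasurableSet (S u)
  subset : ∀ u, S u ⊆ A
  measure_eq : ∀ u ∈ Icc 0 (μ.real A), μ (S u) = ENNReal.ofReal u

namespace IsNestedExhaustion

variable {A : Set α} {S : ℝ → Set α}

theorem measure_sdiff (hS : IsNestedExhaustion μ A S) {u v : ℝ} (hu : u ∈ Icc 0 (μ.real A))
    (hv : v ∈ Icc 0 (μ.real A)) : μ (S u \ S v) = ENNReal.ofReal (u - v) := by
  rcases le_total v u with hvu | huv
  · exact measure_sdiff_eq_ofReal_sub (hS.monotone hvu) (hS.measurableSet v) hv.1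
      (hS.measure_eq v hv) (hS.measure_eq u hu)
  · rw [sdiff_eq_empty.2 (hS.monotone huv), measure_empty, ENNReal.ofReal_of_nonpos (by linarith)]

theorem ae_eq (hS : IsNestedExhaustion μ A S) (hA : μ A ≠ ∞) : S (μ.real A) =ᵐ[μ] A :=
  ae_eq_of_subset_of_measure_ge (hS.subset _)
    (by rw [hS.measure_eq _ ⟨measureReal_nonneg, le_rfl⟩, ofReal_measureReal hA])
    (hS.measurableSet _).nullMeasurableSet hA

theorem continuousOn_setIntegral {E : Type*} [NormedAddCommGroup E] [NormedSpace ℝ E]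
    {f : α → E} (hS : IsNestedExhaustion μ A S) (hf : IntegrableOn f A μ) :
    ContinuousOn (fun u => ∫ x in S u, f x ∂μ) (Icc 0 (μ.real A)) := by
  intro u₀ hu₀
  have hsmall : ∀ g : ℝ → ℝ, Continuous g → g u₀ = 0 → ∀ σ : ℝ → Set α, (∀ u, σ u ⊆ A) →
      (∀ u ∈ Icc 0 (μ.real A), μ (σ u) = ENNReal.ofReal (g u)) →
      Tendsto (fun u => ∫ x in σ u, f x ∂μ) (𝓝[Icc 0 (μ.real A)] u₀) (𝓝 0) := by
    intro g hg hg₀ σ hσA hσ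
    have hlim := ((ENNReal.continuous_ofReal.comp hg).tendsto u₀).mono_left
      (nhdsWithin_le_nhds (s := Icc 0 (μ.real A)))
    rw [Function.comp_apply, hg₀, ENNReal.ofReal_zero] at hlim
    exact hf.tendsto_setIntegral_nhds_zero hσA
      (hlim.congr' (eventually_nhdsWithin_of_forall fun u hu => (hσ u hu).symm))
  have hlim := (hsmall _ (continuous_sub_right u₀) (sub_self u₀) (fun u => S u \ S u₀)
      (fun u => sdiff_subset.trans (hS.subset u)) (fun u hu => hS.measure_sdiff hu hu₀)).sub
    (hsmall _ (continuous_sub_left u₀) (sub_self u₀) (fun u => S u₀ \ S u)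
      (fun u => sdiff_subset.trans (hS.subset u₀)) (fun u hu => hS.measure_sdiff hu₀ hu))
  rw [sub_zero] at hlim
  refine tendsto_sub_nhds_zero_iff.1 (hlim.congr' (eventually_nhdsWithin_of_forall fun u _ => ?_))
  exact (setIntegral_sub_setIntegral (hS.measurableSet u) (hS.measurableSet u₀)
    (hf.mono_set (hS.subset u)) (hf.mono_set (hS.subset u₀))).symm

theorem monotoneOn_setIntegral_sub_mul {f : α → ℝ} {c : ℝ} (hS : IsNestedExhaustion μ A S)
    (hf : IntegrableOn f A μ) (hc : ∀ x ∈ A, c ≤ f x) :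
    MonotoneOn (fun u => ∫ x in S u, f x ∂μ - c * u) (Icc 0 (μ.real A)) := by
  intro u hu v hv huv
  have hμ := hS.measure_sdiff hv hu
  have hlow := setIntegral_ge_of_const_le_real ((hS.measurableSet v).diff (hS.measurableSet u))
    (by simp [hμ]) (fun x hx => hc x (hS.subset v hx.1))
    (hf.mono_set (sdiff_subset.trans (hS.subset v)))
  rw [setIntegral_sdiff (hS.measurableSet u) (hf.mono_set (hS.subset v)) (hS.monotone huv),
    measureReal_def, hμ, ENNReal.toReal_ofReal (sub_nonneg.2 huv)] at hlow
  dsimp only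
  nlinarith

end IsNestedExhaustion

end NestedFamilies

theorem exists_isNestedExhaustion_volume {A : Set ℝ} (hA : MeasurableSet A)
    (hAb : Bornology.IsBounded A) : ∃ S, IsNestedExhaustion volume A S := by
  have hfin : ∀ x, volume (A ∩ Iic x) ≠ ∞ := fun x =>
    (hAb.subset inter_subset_left).measure_lt_top.ne
  set m : ℝ → ℝ := fun x => volume.real (A ∩ Iic x)
  have hm_mono : Monotone m := fun x y hxy =>
    measureReal_mono (inter_subset_inter_right _ (Iic_subset_Iic.2 hxy)) (hfin y)
  have hm_cont : Continuous m := by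
    refine (LipschitzWith.of_le_add fun x y => ?_).continuous
    calc m x ≤ volume.real (A ∩ Iic y ∪ Ioc y x) :=
          measureReal_mono
            (fun t ht => (le_or_gt t y).imp (fun h => ⟨ht.1, h⟩) (fun h => ⟨h, ht.2⟩))
            (((hAb.subset inter_subset_left).union (Metric.isBounded_Ioc _ _)).measure_lt_top.ne)
      _ ≤ m y + volume.real (Ioc y x) := measureReal_union_le _ _
      _ ≤ m y + dist x y := by
          rw [Real.volume_real_Ioc, Real.dist_eq]
          gcongr
          exact max_le (le_abs_self _) (abs_nonneg _)
  obtain ⟨a, b, hab⟩ : ∃ a b, A ⊆ Icc a b := ⟨_, _, hAb.subset_Icc_sInf_sSup⟩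
  have hma : m a = 0 := by
    refine le_antisymm ?_ measureReal_nonneg
    exact (measureReal_mono (s₂ := Icc a a) (fun t ht => ⟨(hab ht.1).1, ht.2⟩) (by simp)).trans
      (by simp [measureReal_def])
  have hmb : m b = volume.real A := by
    show volume.real (A ∩ Iic b) = _
    rw [inter_eq_left.2 (hab.trans Icc_subset_Iic_self)]
  have hT : 0 ≤ volume.real A := measureReal_nonneg
  have hsurj : ∀ u : Icc 0 (volume.real A), ∃ x, m x = u := fun u =>
    intermediate_value_univ a b hm_cont (by rw [hma, hmb]; exact u.2)
  -- Any right inverse of the monotone `m` is strictly monotone, so `A ∩ Iic (ξ u)` is nested.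
  choose ξ hξ using hsurj
  have hξ_mono : StrictMono ξ := fun u v huv => hm_mono.reflect_lt (by rwa [hξ, hξ])
  set S : ℝ → Set ℝ := fun u => A ∩ Iic (ξ (projIcc 0 _ hT u))
  have hvol : ∀ u ∈ Icc 0 (volume.real A), volume (S u) = ENNReal.ofReal u := fun u hu => by
    rw [← ofReal_measureReal (hfin _), projIcc_of_mem hT hu]
    exact congrArg ENNReal.ofReal (hξ ⟨u, hu⟩)
  refine ⟨S, fun u v huv => ?_, fun u => hA.inter measurableSet_Iic, fun u => inter_subset_left,
    hvol⟩
  exact inter_subset_inter_right _ (Iic_subset_Iic.2 (hξ_mono.monotone (monotone_projIcc hT huv)))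

section Antidiagonal

variable {F G : ℝ → ℝ} {p n : ℝ}

theorem exists_add_eq_of_monotoneOn (hF : MonotoneOn F (Icc 0 p)) (hG : MonotoneOn G (Icc 0 n))
    (hFc : ContinuousOn F (Icc 0 p)) (hGc : ContinuousOn G (Icc 0 n)) (hend : F p = G n)
    {u₀ v₀ t : ℝ} (hu₀ : u₀ ∈ Icc 0 p) (hv₀ : v₀ ∈ Icc 0 n) (h₀ : F u₀ = G v₀)
    (ht : u₀ + v₀ ≤ t) (htp : t ≤ p + n) :
    ∃ u ∈ Icc u₀ p, ∃ v ∈ Icc v₀ n, u + v = t ∧ F u = G v := by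
  -- `[lo, hi]` is the set of `u ∈ [u₀, p]` with `t - u ∈ [v₀, n]`.
  set lo := max u₀ (t - n)
  set hi := min p (t - v₀)
  have hlohi : lo ≤ hi :=
    max_le (le_min hu₀.2 (by linarith)) (le_min (by linarith [hv₀.1]) (by linarith [hv₀.2]))
  have hmem : ∀ x ∈ Icc lo hi, x ∈ Icc u₀ p ∧ t - x ∈ Icc v₀ n := fun x hx =>
    ⟨⟨(le_max_left _ _).trans hx.1, hx.2.trans (min_le_left _ _)⟩,
      ⟨by linarith [hx.2.trans (min_le_right _ _)], by linarith [(le_max_right _ _).trans hx.1]⟩⟩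
  have hmem₀ : ∀ x ∈ Icc lo hi, x ∈ Icc 0 p ∧ t - x ∈ Icc 0 n := fun x hx =>
    ⟨⟨hu₀.1.trans (hmem x hx).1.1, (hmem x hx).1.2⟩, ⟨hv₀.1.trans (hmem x hx).2.1, (hmem x hx).2.2⟩⟩
  have hlo := hmem₀ lo ⟨le_rfl, hlohi⟩
  have hhi := hmem₀ hi ⟨hlohi, le_rfl⟩
  have hθc : ContinuousOn (fun x => F x - G (t - x)) (Icc lo hi) :=
    (hFc.mono fun x hx => (hmem₀ x hx).1).sub
      (hGc.comp (continuous_sub_left t).continuousOn fun x hx => (hmem₀ x hx).2)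
  have hθlo : F lo - G (t - lo) ≤ 0 := by
    rcases max_cases u₀ (t - n) with ⟨hlo_eq, -⟩ | ⟨hlo_eq, -⟩
    · have e : lo = u₀ := hlo_eq
      have := hG hv₀ hlo.2 (by linarith)
      rw [e] at this ⊢
      linarith
    · have e : t - lo = n := by rw [show lo = t - n from hlo_eq]; ring
      have := hF hlo.1 ⟨hu₀.1.trans hu₀.2, le_rfl⟩ hlo.1.2
      rw [e]
      linarith
  have hθhi : 0 ≤ F hi - G (t - hi) := by
    rcases min_cases p (t - v₀) with ⟨hhi_eq, -⟩ | ⟨hhi_eq, -⟩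
    · have e : hi = p := hhi_eq
      have := hG hhi.2 ⟨hv₀.1.trans hv₀.2, le_rfl⟩ hhi.2.2
      rw [e] at this ⊢
      linarith
    · have e : t - hi = v₀ := by rw [show hi = t - v₀ from hhi_eq]; ring
      have := hF hu₀ hhi.1 (hmem hi ⟨hlohi, le_rfl⟩).1.1
      rw [e]
      linarith
  obtain ⟨x, hx, hθx⟩ := intermediate_value_Icc hlohi hθc ⟨hθlo, hθhi⟩
  exact ⟨x, (hmem x hx).1, t - x, (hmem x hx).2, by ring, sub_eq_zero.1 hθx⟩

theorem exists_monotone_seq_of_monotoneOn (hF : MonotoneOn F (Icc 0 p))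
    (hG : MonotoneOn G (Icc 0 n)) (hFc : ContinuousOn F (Icc 0 p)) (hGc : ContinuousOn G (Icc 0 n))
    (hp : 0 ≤ p) (hn : 0 ≤ n) (hstart : F 0 = G 0) (hend : F p = G n) {s : ℕ → ℝ}
    (hs : Monotone s) (hs0 : s 0 = 0) (hsle : ∀ j, s j ≤ p + n) :
    ∃ u v : ℕ → ℝ, Monotone u ∧ Monotone v ∧
      ∀ j, u j ∈ Icc 0 p ∧ v j ∈ Icc 0 n ∧ u j + v j = s j ∧ F (u j) = G (v j) := by
  let Good : ℕ → ℝ × ℝ → Prop := fun j x =>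
    x.1 ∈ Icc 0 p ∧ x.2 ∈ Icc 0 n ∧ x.1 + x.2 = s j ∧ F x.1 = G x.2
  have step : ∀ j x, ∃ y, Good j x → Good (j + 1) y ∧ x ≤ y := by
    intro j x
    by_cases hx : Good j x
    · obtain ⟨hu, hv, hsum, hFG⟩ := hx
      obtain ⟨u, hu', v, hv', huv, hFG'⟩ := exists_add_eq_of_monotoneOn hF hG hFc hGc hend hu hv
        hFG (hsum ▸ hs j.le_succ) (hsle _)
      exact ⟨(u, v), fun _ =>
        ⟨⟨⟨hu.1.trans hu'.1, hu'.2⟩, ⟨hv.1.trans hv'.1, hv'.2⟩, huv, hFG'⟩, hu'.1, hv'.1⟩⟩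
    · exact ⟨x, fun h => absurd h hx⟩
  choose next hnext using step
  let w : ℕ → ℝ × ℝ := fun j => Nat.rec (motive := fun _ => ℝ × ℝ) (0, 0) next j
  have hw : ∀ j, Good j (w j) := by
    intro j
    induction j with
    | zero => exact ⟨⟨le_rfl, hp⟩, ⟨le_rfl, hn⟩, by simp [w, hs0], hstart⟩
    | succ j ih => exact (hnext j (w j) ih).1
  have hw_mono : Monotone w := monotone_nat_of_le_succ fun j => (hnext j (w j) (hw j)).2
  exact ⟨fun j => (w j).1, fun j => (w j).2, monotone_fst.comp hw_mono,
    monotone_snd.comp hw_mono, hw⟩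

end Antidiagonal

theorem exists_monotone_seq_setIntegral_eq {B : Set ℝ} (hB : MeasurableSet B)
    (hBb : Bornology.IsBounded B) {h : ℝ → ℝ} (hmeas : Measurable h) (hint : IntegrableOn h B)
    {l : ℝ} (havg : ∫ t in B, h t = l * volume.real B) {s : ℕ → ℝ} (hs : Monotone s)
    (hs0 : s 0 = 0) (hsB : ∀ j, s j ≤ volume.real B) :
    ∃ E : ℕ → Set ℝ, Monotone E ∧ (∀ j, MeasurableSet (E j)) ∧ (∀ j, E j ⊆ B) ∧
      (∀ j, volume (E j) = ENNReal.ofReal (s j)) ∧ ∀ j, ∫ t in E j, h t = l * s j := by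
  have hU : MeasurableSet {t | l ≤ h t} := measurableSet_le measurable_const hmeas
  set P := B ∩ {t | l ≤ h t}
  set N := B \ {t | l ≤ h t}
  have hintP : IntegrableOn h P := hint.mono_set inter_subset_left
  have hintN : IntegrableOn h N := hint.mono_set sdiff_subset
  obtain ⟨SP, hSP⟩ := exists_isNestedExhaustion_volume (hB.inter hU) (hBb.subset inter_subset_left)
  obtain ⟨SN, hSN⟩ := exists_isNestedExhaustion_volume (hB.diff hU) (hBb.subset sdiff_subset)
  -- `G v = l * v - ∫ t in SN v, h t`, written as the analogue of `F` for `-h ≥ -l` on `N`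
  set F := fun u => (∫ t in SP u, h t) - l * u
  set G := fun v => (∫ t in SN v, -h t) - -l * v
  have hF : MonotoneOn F (Icc 0 (volume.real P)) :=
    hSP.monotoneOn_setIntegral_sub_mul hintP fun t ht => ht.2
  have hG : MonotoneOn G (Icc 0 (volume.real N)) :=
    hSN.monotoneOn_setIntegral_sub_mul hintN.neg fun t ht => neg_le_neg (not_le.1 ht.2).le
  have hFc : ContinuousOn F (Icc 0 (volume.real P)) :=
    (hSP.continuousOn_setIntegral hintP).sub (continuousOn_const.mul continuousOn_id)
  have hGc : ContinuousOn G (Icc 0 (volume.real N)) :=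
    (hSN.continuousOn_setIntegral hintN.neg).sub (continuousOn_const.mul continuousOn_id)
  have hstart : F 0 = G 0 := by
    simp [F, G, hSP.measure_eq 0 ⟨le_rfl, measureReal_nonneg⟩,
      hSN.measure_eq 0 ⟨le_rfl, measureReal_nonneg⟩]
  have hsplit : (∫ t in P, h t) + ∫ t in N, h t = ∫ t in B, h t := integral_inter_add_sdiff hU hint
  have hpn : volume.real P + volume.real N = volume.real B :=
    measureReal_inter_add_sdiff hU hBb.measure_lt_top.ne
  have hend : F (volume.real P) = G (volume.real N) := by
    simp only [F, G, integral_neg]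
    rw [setIntegral_congr_set (hSP.ae_eq (hBb.subset inter_subset_left).measure_lt_top.ne),
      setIntegral_congr_set (hSN.ae_eq (hBb.subset sdiff_subset).measure_lt_top.ne)]
    linear_combination hsplit + havg - l * hpn
  obtain ⟨u, v, hu, hv, huv⟩ := exists_monotone_seq_of_monotoneOn hF hG hFc hGc measureReal_nonneg
    measureReal_nonneg hstart hend hs hs0 fun j => (hsB j).trans_eq hpn.symm
  have hdisj : ∀ j, Disjoint (SP (u j)) (SN (v j)) := fun j =>
    disjoint_sdiff_inter.symm.mono (hSP.subset _) (hSN.subset _)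
  refine ⟨fun j => SP (u j) ∪ SN (v j), fun i j hij => union_subset_union
    (hSP.monotone (hu hij)) (hSN.monotone (hv hij)), fun j => (hSP.measurableSet _).union
    (hSN.measurableSet _), fun j => union_subset ((hSP.subset _).trans inter_subset_left)
    ((hSN.subset _).trans sdiff_subset), fun j => ?_, fun j => ?_⟩
  · obtain ⟨hu, hv, hsum, -⟩ := huv j
    rw [measure_union (hdisj j) (hSN.measurableSet _), hSP.measure_eq _ hu, hSN.measure_eq _ hv,
      ← ENNReal.ofReal_add hu.1 hv.1, hsum]
  · obtain ⟨-, -, hsum, hFG⟩ := huv j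
    rw [setIntegral_union (hdisj j) (hSN.measurableSet _) (hintP.mono_set (hSP.subset _))
      (hintN.mono_set (hSN.subset _))]
    simp only [F, G, integral_neg] at hFG
    linear_combination hFG + l * hsum

theorem stmt17_general (M : ℝ) (hM : 0 < M) (h : ℝ → ℝ) (hmeas : Measurable h)
    (hint : MeasureTheory.IntegrableOn h (Set.Icc 0 M))
    (l : ℝ) (havg : (1 / M) * ∫ t in Set.Icc (0 : ℝ) M, h t = l)
    (a : ℕ → ℝ) (ha : ∀ j, 0 < a j) (hsum : ∑' j, a j = M) :
    ∃ A : ℕ → Set ℝ, (∀ j, A j ⊆ Set.Icc 0 M) ∧ (∀ j, MeasurableSet (A j)) ∧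
      Pairwise (Function.onFun Disjoint A) ∧
      (∀ j, MeasureTheory.volume (A j) = ENNReal.ofReal (a j)) ∧
      (∑' j, MeasureTheory.volume (A j) = ENNReal.ofReal M) ∧
      (∀ j, (1 / a j) * ∫ t in A j, h t = l) := by
  have ha_sum : Summable a := by
    by_contra hna
    rw [tsum_eq_zero_of_not_summable hna] at hsum
    exact hM.ne hsum
  have hvolM : volume.real (Icc 0 M) = M := by simp [hM.le]
  have hs : Monotone fun j => ∑ i ∈ Finset.range j, a i :=
    monotone_nat_of_le_succ fun j => by simp [Finset.sum_range_succ, (ha j).le]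
  obtain ⟨E, hE, hEm, hEsub, hEvol, hEint⟩ := exists_monotone_seq_setIntegral_eq measurableSet_Icc
    (Metric.isBounded_Icc 0 M) hmeas hint (l := l) (by rw [hvolM, ← havg]; field_simp) hs
    (Finset.sum_range_zero a) fun j => by
      rw [hvolM, ← hsum]
      exact ha_sum.sum_le_tsum _ fun i _ => (ha i).le
  have hEsucc : ∀ j, volume (E (j + 1) \ E j) = ENNReal.ofReal (a j) := fun j => by
    rw [measure_sdiff_eq_ofReal_sub (hE j.le_succ) (hEm j) (Finset.sum_nonneg fun i _ => (ha i).le)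
      (hEvol j) (hEvol (j + 1)), Finset.sum_range_succ, add_sub_cancel_left]
  refine ⟨fun j => E (j + 1) \ E j, fun j => sdiff_subset.trans (hEsub _),
    fun j => (hEm _).diff (hEm _), (pairwise_disjoint_on _).2 fun i j hij =>
      disjoint_sdiff_right.mono_left (sdiff_subset.trans (hE hij)), hEsucc, ?_, fun j => ?_⟩
  · rw [tsum_congr hEsucc, ← ENNReal.ofReal_tsum_of_nonneg (fun j => (ha j).le) ha_sum, hsum]
  · rw [setIntegral_sdiff (hEm j) (hint.mono_set (hEsub _)) (hE j.le_succ), hEint, hEint,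
      Finset.sum_range_succ]
    field_simp [(ha j).ne']
    ring

/-- Partition claim used in Theorem 4.1: if `h ≥ 0` on `[0,M]` has average `λ` and
`Σ a_j = M` with `a_j > 0`, then `[0,M]` admits pairwise disjoint measurable sets `A_j`
with `|A_j| = a_j`, `Σ |A_j| = M` and average of `h` over each `A_j` equal to `λ`. -/
theorem stmt17 (M : ℝ) (hM : 0 < M) (h : ℝ → ℝ) (hmeas : Measurable h)
    (h0 : ∀ t, 0 ≤ h t) (hint : MeasureTheory.IntegrableOn h (Set.Icc 0 M))
    (l : ℝ) (hl : 0 < l) (havg : (1 / M) * ∫ t in Set.Icc (0 : ℝ) M, h t = l)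
    (a : ℕ → ℝ) (ha : ∀ j, 0 < a j) (hsum : ∑' j, a j = M) :
    ∃ A : ℕ → Set ℝ, (∀ j, A j ⊆ Set.Icc 0 M) ∧ (∀ j, MeasurableSet (A j)) ∧
      Pairwise (Function.onFun Disjoint A) ∧
      (∀ j, MeasureTheory.volume (A j) = ENNReal.ofReal (a j)) ∧
      (∑' j, MeasureTheory.volume (A j) = ENNReal.ofReal M) ∧
      (∀ j, (1 / a j) * ∫ t in A j, h t = l) :=
  stmt17_general M hM h hmeas hint l havg a ha hsum
end
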